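/- The Hilbert-style proof system of LP^{→,F} is strongly complete with respect to its three-valued semantics: for every set Γ of formulas and every formula A, Γ ⊢ A if and only if Γ ⊨ A. -/
import Mathlib


/-- The three truth values: true, false, both-true-and-false. -/
inductive TV : Type
  | t : TV
  | f : TV
  | b : TV
  deriving DecidableEq

/-- Formulas of LP^{→,F}: propositional variables, falsity constant,
    negation, conjunction, disjunction, implication. -/
inductive Fm : Type
  | var : ℕ → Fm
  | fls : Fm
  | neg : Fm → Fm
  | conj : Fm → Fm → Fm
  | disj : Fm → Fm → Fm
  | impl : Fm → Fm → Fm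
  deriving DecidableEq

/-- The LP^{→,F} negation truth function. -/
def TV.negLP : TV → TV
  | .t => .f
  | .f => .t
  | .b => .b

/-- The LP^{→,F} conjunction truth function. -/
def TV.andLP : TV → TV → TV
  | .f, _ => .f
  | _, .f => .f
  | .t, .t => .t
  | _, _ => .b

/-- The LP^{→,F} disjunction truth function. -/
def TV.orLP : TV → TV → TV
  | .t, _ => .t
  | _, .t => .t
  | .f, .f => .f
  | _, _ => .b

/-- The LP^{→,F} implication truth function: t if the antecedent is f,
    otherwise the value of the consequent. -/
def TV.implLP : TV → TV → TV
  | .f, _ => .t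
  | _, y => y

/-- A valuation for LP^{→,F}. -/
def IsValuation (ν : Fm → TV) : Prop :=
  ν .fls = .f ∧
  (∀ A, ν (.neg A) = (ν A).negLP) ∧
  (∀ A B, ν (.conj A B) = (ν A).andLP (ν B)) ∧
  (∀ A B, ν (.disj A B) = (ν A).orLP (ν B)) ∧
  (∀ A B, ν (.impl A B) = (ν A).implLP (ν B))

/-- Logical equivalence in LP^{→,F}. -/
def LEquiv (A B : Fm) : Prop := ∀ ν : Fm → TV, IsValuation ν → ν A = ν B

/-- The truth constant T, an abbreviation for ¬F. -/
def Fm.tru : Fm := .neg .fls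

/-- A truth value is designated iff it is t or ⊤. -/
def Designated (v : TV) : Prop := v = .t ∨ v = .b

/-- Semantic logical consequence in LP^{→,F}. -/
def LPCons (Γ : Set Fm) (A : Fm) : Prop :=
  ∀ ν : Fm → TV, IsValuation ν → ((∃ B ∈ Γ, ν B = .f) ∨ Designated (ν A))

/-- Validity in LP^{→,F}. -/
def LPValid (A : Fm) : Prop := ∀ ν : Fm → TV, IsValuation ν → Designated (ν A)

/-- Bi-implication: A ↔ B stands for (A → B) ∧ (B → A). -/
def Fm.biimpl (A B : Fm) : Fm := (A.impl B).conj (B.impl A)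

/-- Derivability in the Hilbert-style proof system of LP^{→,F}:
    modus ponens as the only inference rule, together with the axiom
    schemas of the positive fragment of classical propositional logic,
    the schemas moving negation inward, and the law of excluded middle. -/
inductive Deriv (Γ : Set Fm) : Fm → Prop
  | hyp {A : Fm} : A ∈ Γ → Deriv Γ A
  | ax1 (A B : Fm) : Deriv Γ (A.impl (B.impl A))
  | ax2 (A B : Fm) : Deriv Γ (((A.impl B).impl A).impl A)
  | ax3 (A B C : Fm) :
      Deriv Γ ((A.impl (B.impl C)).impl ((A.impl B).impl (A.impl C)))
  | ax4 (A : Fm) : Deriv Γ (Fm.fls.impl A)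
  | ax5 (A B : Fm) : Deriv Γ ((A.conj B).impl A)
  | ax6 (A B : Fm) : Deriv Γ ((A.conj B).impl B)
  | ax7 (A B : Fm) : Deriv Γ (A.impl (B.impl (A.conj B)))
  | ax8 (A B : Fm) : Deriv Γ (A.impl (A.disj B))
  | ax9 (A B : Fm) : Deriv Γ (B.impl (A.disj B))
  | ax10 (A B C : Fm) :
      Deriv Γ ((A.impl C).impl ((B.impl C).impl ((A.disj B).impl C)))
  | ax11 (A : Fm) : Deriv Γ (A.neg.neg.biimpl A)
  | ax12 (A B : Fm) : Deriv Γ ((A.impl B).neg.biimpl (A.conj B.neg))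
  | ax13 (A B : Fm) : Deriv Γ ((A.conj B).neg.biimpl (A.neg.disj B.neg))
  | ax14 (A B : Fm) : Deriv Γ ((A.disj B).neg.biimpl (A.neg.conj B.neg))
  | ax15 (A : Fm) : Deriv Γ (A.disj A.neg)
  | mp {A B : Fm} : Deriv Γ (A.impl B) → Deriv Γ A → Deriv Γ B

section LPAux

open Fm

/-- Weakening. -/
theorem Deriv.weaken {Γ Δ : Set Fm} {A : Fm} (h : Deriv Γ A) (hs : Γ ⊆ Δ) :
    Deriv Δ A := by
  induction h with
  | hyp h => exact Deriv.hyp (hs h)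
  | mp _ _ ih1 ih2 => exact Deriv.mp ih1 ih2
  | ax1 A B => exact Deriv.ax1 A B
  | ax2 A B => exact Deriv.ax2 A B
  | ax3 A B C => exact Deriv.ax3 A B C
  | ax4 A => exact Deriv.ax4 A
  | ax5 A B => exact Deriv.ax5 A B
  | ax6 A B => exact Deriv.ax6 A B
  | ax7 A B => exact Deriv.ax7 A B
  | ax8 A B => exact Deriv.ax8 A B
  | ax9 A B => exact Deriv.ax9 A B
  | ax10 A B C => exact Deriv.ax10 A B C
  | ax11 A => exact Deriv.ax11 A
  | ax12 A B => exact Deriv.ax12 A B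
  | ax13 A B => exact Deriv.ax13 A B
  | ax14 A B => exact Deriv.ax14 A B
  | ax15 A => exact Deriv.ax15 A

theorem Deriv.id (Γ : Set Fm) (A : Fm) : Deriv Γ (A.impl A) :=
  Deriv.mp (Deriv.mp (Deriv.ax3 A (A.impl A) A) (Deriv.ax1 A (A.impl A)))
    (Deriv.ax1 A A)

/-- Deduction theorem. -/
theorem Deriv.deduction {Γ : Set Fm} {A B : Fm} (h : Deriv (insert A Γ) B) :
    Deriv Γ (A.impl B) := by
  induction h with
  | @hyp B h =>
    rcases h with h | h
    · exact h ▸ Deriv.id Γ A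
    · exact Deriv.mp (Deriv.ax1 B A) (Deriv.hyp h)
  | @mp X Y _ _ ih1 ih2 => exact Deriv.mp (Deriv.mp (Deriv.ax3 A X Y) ih1) ih2
  | ax1 X Y => exact Deriv.mp (Deriv.ax1 _ A) (Deriv.ax1 X Y)
  | ax2 X Y => exact Deriv.mp (Deriv.ax1 _ A) (Deriv.ax2 X Y)
  | ax3 X Y Z => exact Deriv.mp (Deriv.ax1 _ A) (Deriv.ax3 X Y Z)
  | ax4 X => exact Deriv.mp (Deriv.ax1 _ A) (Deriv.ax4 X)
  | ax5 X Y => exact Deriv.mp (Deriv.ax1 _ A) (Deriv.ax5 X Y)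
  | ax6 X Y => exact Deriv.mp (Deriv.ax1 _ A) (Deriv.ax6 X Y)
  | ax7 X Y => exact Deriv.mp (Deriv.ax1 _ A) (Deriv.ax7 X Y)
  | ax8 X Y => exact Deriv.mp (Deriv.ax1 _ A) (Deriv.ax8 X Y)
  | ax9 X Y => exact Deriv.mp (Deriv.ax1 _ A) (Deriv.ax9 X Y)
  | ax10 X Y Z => exact Deriv.mp (Deriv.ax1 _ A) (Deriv.ax10 X Y Z)
  | ax11 X => exact Deriv.mp (Deriv.ax1 _ A) (Deriv.ax11 X)
  | ax12 X Y => exact Deriv.mp (Deriv.ax1 _ A) (Deriv.ax12 X Y)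
  | ax13 X Y => exact Deriv.mp (Deriv.ax1 _ A) (Deriv.ax13 X Y)
  | ax14 X Y => exact Deriv.mp (Deriv.ax1 _ A) (Deriv.ax14 X Y)
  | ax15 X => exact Deriv.mp (Deriv.ax1 _ A) (Deriv.ax15 X)

theorem Deriv.syll {Γ : Set Fm} {A B C : Fm} (h1 : Deriv Γ (A.impl B))
    (h2 : Deriv Γ (B.impl C)) : Deriv Γ (A.impl C) :=
  Deriv.deduction
    (Deriv.mp (h2.weaken (Set.subset_insert _ _))
      (Deriv.mp (h1.weaken (Set.subset_insert _ _)) (Deriv.hyp (Set.mem_insert _ _))))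

/-- A derivation from the union of a chain comes from one member. -/
theorem Deriv.of_chain {c : Set (Set Fm)} (hne : c.Nonempty)
    (hch : IsChain (· ⊆ ·) c) {A : Fm} (h : Deriv (⋃₀ c) A) :
    ∃ Δ ∈ c, Deriv Δ A := by
  induction h with
  | @hyp B h =>
    obtain ⟨Δ, hΔ, hB⟩ := h
    exact ⟨Δ, hΔ, Deriv.hyp hB⟩
  | @mp X Y _ _ ih1 ih2 =>
    obtain ⟨Δ1, h1, d1⟩ := ih1
    obtain ⟨Δ2, h2, d2⟩ := ih2
    rcases hch.total h1 h2 with hs | hs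
    · exact ⟨Δ2, h2, Deriv.mp (d1.weaken hs) d2⟩
    · exact ⟨Δ1, h1, Deriv.mp d1 (d2.weaken hs)⟩
  | ax1 X Y => exact ⟨hne.choose, hne.choose_spec, Deriv.ax1 X Y⟩
  | ax2 X Y => exact ⟨hne.choose, hne.choose_spec, Deriv.ax2 X Y⟩
  | ax3 X Y Z => exact ⟨hne.choose, hne.choose_spec, Deriv.ax3 X Y Z⟩
  | ax4 X => exact ⟨hne.choose, hne.choose_spec, Deriv.ax4 X⟩
  | ax5 X Y => exact ⟨hne.choose, hne.choose_spec, Deriv.ax5 X Y⟩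
  | ax6 X Y => exact ⟨hne.choose, hne.choose_spec, Deriv.ax6 X Y⟩
  | ax7 X Y => exact ⟨hne.choose, hne.choose_spec, Deriv.ax7 X Y⟩
  | ax8 X Y => exact ⟨hne.choose, hne.choose_spec, Deriv.ax8 X Y⟩
  | ax9 X Y => exact ⟨hne.choose, hne.choose_spec, Deriv.ax9 X Y⟩
  | ax10 X Y Z => exact ⟨hne.choose, hne.choose_spec, Deriv.ax10 X Y Z⟩
  | ax11 X => exact ⟨hne.choose, hne.choose_spec, Deriv.ax11 X⟩
  | ax12 X Y => exact ⟨hne.choose, hne.choose_spec, Deriv.ax12 X Y⟩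
  | ax13 X Y => exact ⟨hne.choose, hne.choose_spec, Deriv.ax13 X Y⟩
  | ax14 X Y => exact ⟨hne.choose, hne.choose_spec, Deriv.ax14 X Y⟩
  | ax15 X => exact ⟨hne.choose, hne.choose_spec, Deriv.ax15 X⟩

end LPAux
section LPMax

open Fm Classical

variable {Δ : Set Fm} {A : Fm}

/-- A maximal theory avoiding `A`. -/
structure LPMaxTh (Δ : Set Fm) (A : Fm) : Prop where
  nd : ¬ Deriv Δ A
  ins : ∀ X, X ∉ Δ → Deriv (insert X Δ) A

namespace LPMaxTh

variable (h : LPMaxTh Δ A)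
include h

theorem notmem {X : Fm} (hX : X ∉ Δ) : Deriv Δ (X.impl A) :=
  Deriv.deduction (h.ins X hX)

theorem closed {X : Fm} (hX : Deriv Δ X) : X ∈ Δ := by
  by_contra hn
  exact h.nd (Deriv.mp (h.notmem hn) hX)

theorem mem_of_imp {X Y : Fm} (hXY : Deriv Δ (X.impl Y)) (hX : X ∈ Δ) : Y ∈ Δ :=
  h.closed (Deriv.mp hXY (Deriv.hyp hX))

theorem prime {X Y : Fm} (hm : X.disj Y ∈ Δ) : X ∈ Δ ∨ Y ∈ Δ := by
  by_contra hn
  push_neg at hn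
  exact h.nd (Deriv.mp
    (Deriv.mp (Deriv.mp (Deriv.ax10 X Y A) (h.notmem hn.1)) (h.notmem hn.2))
    (Deriv.hyp hm))

theorem fls_notmem : Fm.fls ∉ Δ := fun hf =>
  h.nd (Deriv.mp (Deriv.ax4 A) (Deriv.hyp hf))

theorem mem_conj {X Y : Fm} : X.conj Y ∈ Δ ↔ X ∈ Δ ∧ Y ∈ Δ := by
  constructor
  · exact fun hm => ⟨h.mem_of_imp (Deriv.ax5 X Y) hm, h.mem_of_imp (Deriv.ax6 X Y) hm⟩
  · rintro ⟨hX, hY⟩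
    exact h.closed (Deriv.mp (Deriv.mp (Deriv.ax7 X Y) (Deriv.hyp hX)) (Deriv.hyp hY))

theorem mem_disj {X Y : Fm} : X.disj Y ∈ Δ ↔ X ∈ Δ ∨ Y ∈ Δ := by
  constructor
  · exact h.prime
  · rintro (hX | hY)
    · exact h.mem_of_imp (Deriv.ax8 X Y) hX
    · exact h.mem_of_imp (Deriv.ax9 X Y) hY

theorem mem_impl {X Y : Fm} : X.impl Y ∈ Δ ↔ (X ∉ Δ ∨ Y ∈ Δ) := by
  constructor
  · intro hm
    by_cases hX : X ∈ Δ
    · exact Or.inr (h.mem_of_imp (Deriv.hyp hm) hX)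
    · exact Or.inl hX
  · rintro (hX | hY)
    · by_contra hn
      have h1 : Deriv Δ (X.impl A) := h.notmem hX
      have h2 : Deriv Δ ((X.impl Y).impl A) := h.notmem hn
      have h3 : Deriv Δ ((A.impl Y).impl A) := by
        apply Deriv.deduction
        have hXY : Deriv (insert (A.impl Y) Δ) (X.impl Y) :=
          Deriv.syll (h1.weaken (Set.subset_insert _ _)) (Deriv.hyp (Set.mem_insert _ _))
        exact Deriv.mp (h2.weaken (Set.subset_insert _ _)) hXY
      exact h.nd (Deriv.mp (Deriv.ax2 A Y) h3)
    · exact h.closed (Deriv.mp (Deriv.ax1 Y X) (Deriv.hyp hY))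

theorem mem_of_biimpl_l {X Y : Fm} (hb : Deriv Δ (X.biimpl Y)) (hX : X ∈ Δ) : Y ∈ Δ :=
  h.mem_of_imp (Deriv.mp (Deriv.ax5 _ _) hb) hX

theorem mem_of_biimpl_r {X Y : Fm} (hb : Deriv Δ (X.biimpl Y)) (hY : Y ∈ Δ) : X ∈ Δ :=
  h.mem_of_imp (Deriv.mp (Deriv.ax6 _ _) hb) hY

theorem mem_negneg {X : Fm} : X.neg.neg ∈ Δ ↔ X ∈ Δ :=
  ⟨h.mem_of_biimpl_l (Deriv.ax11 X), h.mem_of_biimpl_r (Deriv.ax11 X)⟩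

theorem neg_mem {X : Fm} (hX : X ∉ Δ) : X.neg ∈ Δ :=
  (h.prime (h.closed (Deriv.ax15 X))).resolve_left hX

theorem mem_neg_impl {X Y : Fm} : (X.impl Y).neg ∈ Δ ↔ X ∈ Δ ∧ Y.neg ∈ Δ := by
  rw [show (X.impl Y).neg ∈ Δ ↔ X.conj Y.neg ∈ Δ from
    ⟨h.mem_of_biimpl_l (Deriv.ax12 X Y), h.mem_of_biimpl_r (Deriv.ax12 X Y)⟩]
  exact h.mem_conj

theorem mem_neg_conj {X Y : Fm} : (X.conj Y).neg ∈ Δ ↔ X.neg ∈ Δ ∨ Y.neg ∈ Δ := by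
  rw [show (X.conj Y).neg ∈ Δ ↔ X.neg.disj Y.neg ∈ Δ from
    ⟨h.mem_of_biimpl_l (Deriv.ax13 X Y), h.mem_of_biimpl_r (Deriv.ax13 X Y)⟩]
  exact h.mem_disj

theorem mem_neg_disj {X Y : Fm} : (X.disj Y).neg ∈ Δ ↔ X.neg ∈ Δ ∧ Y.neg ∈ Δ := by
  rw [show (X.disj Y).neg ∈ Δ ↔ X.neg.conj Y.neg ∈ Δ from
    ⟨h.mem_of_biimpl_l (Deriv.ax14 X Y), h.mem_of_biimpl_r (Deriv.ax14 X Y)⟩]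
  exact h.mem_conj

end LPMaxTh

/-- The canonical valuation of a theory. -/
noncomputable def canonVal (Δ : Set Fm) : Fm → TV := fun X =>
  if X ∈ Δ then (if X.neg ∈ Δ then .b else .t) else .f

theorem canonVal_isValuation (h : LPMaxTh Δ A) : IsValuation (canonVal Δ) := by
  refine ⟨?_, ?_, ?_, ?_, ?_⟩
  · simp [canonVal, h.fls_notmem]
  · intro X
    by_cases h1 : X ∈ Δ <;> by_cases h2 : X.neg ∈ Δ <;>
      simp [canonVal, h1, h2, h.mem_negneg, TV.negLP]
    · exact absurd (h.neg_mem h1) h2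
  · intro X Y
    by_cases h1 : X ∈ Δ <;> by_cases h2 : Y ∈ Δ <;>
      by_cases h3 : X.neg ∈ Δ <;> by_cases h4 : Y.neg ∈ Δ <;>
      simp [canonVal, h.mem_conj, h.mem_neg_conj, h1, h2, h3, h4, TV.andLP]
  · intro X Y
    by_cases h1 : X ∈ Δ <;> by_cases h2 : Y ∈ Δ <;>
      by_cases h3 : X.neg ∈ Δ <;> by_cases h4 : Y.neg ∈ Δ <;>
      simp [canonVal, h.mem_disj, h.mem_neg_disj, h1, h2, h3, h4, TV.orLP] <;>
      first
        | exact h.neg_mem h1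
        | exact h.neg_mem h2
        | (exact absurd (h.neg_mem h1) h3)
        | (exact absurd (h.neg_mem h2) h4)
  · intro X Y
    by_cases h1 : X ∈ Δ <;> by_cases h2 : Y ∈ Δ <;>
      by_cases h3 : X.neg ∈ Δ <;> by_cases h4 : Y.neg ∈ Δ <;>
      simp [canonVal, h.mem_impl, h.mem_neg_impl, h1, h2, h3, h4, TV.implLP]

end LPMax
section LPSound

theorem lp_sound {Γ : Set Fm} {A : Fm} (h : Deriv Γ A) : LPCons Γ A := by
  induction h with
  | @hyp B h =>
    intro ν hv
    by_cases hB : ν B = TV.f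
    · exact Or.inl ⟨B, h, hB⟩
    · right
      rcases hX : ν B with _ | _ | _
      · exact Or.inl rfl
      · exact absurd hX hB
      · exact Or.inr rfl
  | @mp X Y _ _ ih1 ih2 =>
    intro ν hv
    rcases ih1 ν hv with hf | hd1
    · exact Or.inl hf
    rcases ih2 ν hv with hf | hd2
    · exact Or.inl hf
    right
    rw [hv.2.2.2.2] at hd1
    rcases hd2 with h2 | h2 <;> rw [h2] at hd1 <;>
      rcases hY : ν Y with _ | _ | _ <;> simp_all [Designated, TV.implLP]
  | ax1 X Y =>
    intro ν hv; right; obtain ⟨hf, hn, hc, hd, hi⟩ := hv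
    simp only [hi]
    rcases hX : ν X with _ | _ | _ <;> rcases hY : ν Y with _ | _ | _ <;>
      simp [Designated, TV.implLP]
  | ax2 X Y =>
    intro ν hv; right; obtain ⟨hf, hn, hc, hd, hi⟩ := hv
    simp only [hi]
    rcases hX : ν X with _ | _ | _ <;> rcases hY : ν Y with _ | _ | _ <;>
      simp [Designated, TV.implLP]
  | ax3 X Y Z =>
    intro ν hv; right; obtain ⟨hf, hn, hc, hd, hi⟩ := hv
    simp only [hi]
    rcases hX : ν X with _ | _ | _ <;> rcases hY : ν Y with _ | _ | _ <;>
      rcases hZ : ν Z with _ | _ | _ <;> simp [Designated, TV.implLP]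
  | ax4 X =>
    intro ν hv; right; obtain ⟨hf, hn, hc, hd, hi⟩ := hv
    simp only [hi, hf]
    simp [Designated, TV.implLP]
  | ax5 X Y =>
    intro ν hv; right; obtain ⟨hf, hn, hc, hd, hi⟩ := hv
    simp only [hi, hc]
    rcases hX : ν X with _ | _ | _ <;> rcases hY : ν Y with _ | _ | _ <;>
      simp [Designated, TV.implLP, TV.andLP]
  | ax6 X Y =>
    intro ν hv; right; obtain ⟨hf, hn, hc, hd, hi⟩ := hv
    simp only [hi, hc]
    rcases hX : ν X with _ | _ | _ <;> rcases hY : ν Y with _ | _ | _ <;>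
      simp [Designated, TV.implLP, TV.andLP]
  | ax7 X Y =>
    intro ν hv; right; obtain ⟨hf, hn, hc, hd, hi⟩ := hv
    simp only [hi, hc]
    rcases hX : ν X with _ | _ | _ <;> rcases hY : ν Y with _ | _ | _ <;>
      simp [Designated, TV.implLP, TV.andLP]
  | ax8 X Y =>
    intro ν hv; right; obtain ⟨hf, hn, hc, hd, hi⟩ := hv
    simp only [hi, hd]
    rcases hX : ν X with _ | _ | _ <;> rcases hY : ν Y with _ | _ | _ <;>
      simp [Designated, TV.implLP, TV.orLP]
  | ax9 X Y =>
    intro ν hv; right; obtain ⟨hf, hn, hc, hd, hi⟩ := hv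
    simp only [hi, hd]
    rcases hX : ν X with _ | _ | _ <;> rcases hY : ν Y with _ | _ | _ <;>
      simp [Designated, TV.implLP, TV.orLP]
  | ax10 X Y Z =>
    intro ν hv; right; obtain ⟨hf, hn, hc, hd, hi⟩ := hv
    simp only [hi, hd]
    rcases hX : ν X with _ | _ | _ <;> rcases hY : ν Y with _ | _ | _ <;>
      rcases hZ : ν Z with _ | _ | _ <;> simp [Designated, TV.implLP, TV.orLP]
  | ax11 X =>
    intro ν hv; right; obtain ⟨hf, hn, hc, hd, hi⟩ := hv
    simp only [Fm.biimpl, hi, hc, hn]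
    rcases hX : ν X with _ | _ | _ <;>
      simp [Designated, TV.implLP, TV.andLP, TV.negLP]
  | ax12 X Y =>
    intro ν hv; right; obtain ⟨hf, hn, hc, hd, hi⟩ := hv
    simp only [Fm.biimpl, hi, hc, hn]
    rcases hX : ν X with _ | _ | _ <;> rcases hY : ν Y with _ | _ | _ <;>
      simp [Designated, TV.implLP, TV.andLP, TV.negLP]
  | ax13 X Y =>
    intro ν hv; right; obtain ⟨hf, hn, hc, hd, hi⟩ := hv
    simp only [Fm.biimpl, hi, hc, hd, hn]
    rcases hX : ν X with _ | _ | _ <;> rcases hY : ν Y with _ | _ | _ <;>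
      simp [Designated, TV.implLP, TV.andLP, TV.orLP, TV.negLP]
  | ax14 X Y =>
    intro ν hv; right; obtain ⟨hf, hn, hc, hd, hi⟩ := hv
    simp only [Fm.biimpl, hi, hc, hd, hn]
    rcases hX : ν X with _ | _ | _ <;> rcases hY : ν Y with _ | _ | _ <;>
      simp [Designated, TV.implLP, TV.andLP, TV.orLP, TV.negLP]
  | ax15 X =>
    intro ν hv; right; obtain ⟨hf, hn, hc, hd, hi⟩ := hv
    simp only [hd, hn]
    rcases hX : ν X with _ | _ | _ <;> simp [Designated, TV.orLP, TV.negLP]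

end LPSound
/-- Strong soundness and completeness of the Hilbert-style proof system of
    LP^{→,F} with respect to its three-valued semantics. -/
theorem lp_strong_completeness :
    ∀ (Γ : Set Fm) (A : Fm), Deriv Γ A ↔ LPCons Γ A := by
  intro Γ A
  constructor
  · exact lp_sound
  · intro hcons
    by_contra hnd
    -- Lindenbaum: extend Γ to a maximal theory avoiding A
    obtain ⟨Δ, hsub, hmem, hmax⟩ :
        ∃ Δ, Γ ⊆ Δ ∧ Δ ∈ {Δ : Set Fm | ¬ Deriv Δ A} ∧
          ∀ Δ' ∈ {Δ : Set Fm | ¬ Deriv Δ A}, Δ ⊆ Δ' → Δ' ⊆ Δ := by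
      obtain ⟨Δ, hsub, hm⟩ := zorn_subset_nonempty {Δ : Set Fm | ¬ Deriv Δ A}
        (fun c hc hch hne => by
          refine ⟨⋃₀ c, ?_, fun s hs => Set.subset_sUnion_of_mem hs⟩
          intro hder
          obtain ⟨Δ, hΔ, hd⟩ := Deriv.of_chain hne hch hder
          exact hc hΔ hd) Γ hnd
      exact ⟨Δ, hsub, hm.prop, fun Δ' h1 h2 => hm.le_of_ge h1 h2⟩
    have hmt : LPMaxTh Δ A := by
      refine ⟨hmem, fun X hX => ?_⟩
      by_contra hnd'
      exact hX (hmax _ hnd' (Set.subset_insert _ _) (Set.mem_insert _ _))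
    rcases hcons (canonVal Δ) (canonVal_isValuation hmt) with ⟨B, hB, hBf⟩ | hdes
    · have hBΔ : B ∈ Δ := hsub hB
      simp only [canonVal, if_pos hBΔ] at hBf
      split at hBf <;> simp_all
    · have hA : A ∈ Δ := by
        by_contra hAn
        simp only [canonVal, if_neg hAn] at hdes
        rcases hdes with h | h <;> simp_all [Designated]
      exact hmem (Deriv.hyp hA)
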